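/- The function C^L(e,d) = 1 − (1 − (2e + d))² / (1 − 2d) is quasi-concave on [0,1] × [0, 1/2): for every α ∈ [0,1] and every (e,d) with e ∈ [0,1] and 0 ≤ d < 1/2, one has C^L(e,d) ≥ 1 − α if and only if α·(1 − 2d) − (1 − (2e + d))² ≥ 0; consequently each superlevel set {(e,d) ∈ [0,1] × [0,1/2) : C^L(e,d) ≥ 1 − α} is a convex set. -/
import Mathlib


/-- `C^L(e,d) = 1 − (1 − (2e + d))²/(1 − 2d)`. -/
noncomputable def CL (e d : ℝ) : ℝ := 1 - (1 - (2 * e + d)) ^ 2 / (1 - 2 * d)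

/-- Quasi-concavity of `C^L` on `[0,1] × [0,1/2)`: for every `α ∈ [0,1]` and every `(e,d)`
with `e ∈ [0,1]` and `0 ≤ d < 1/2`, `C^L(e,d) ≥ 1 − α` iff
`α·(1 − 2d) − (1 − (2e + d))² ≥ 0`; consequently each superlevel set
`{(e,d) ∈ [0,1] × [0,1/2) : C^L(e,d) ≥ 1 − α}` is convex. -/
theorem CL_quasiconcave :
    (∀ α ∈ Set.Icc (0 : ℝ) 1, ∀ e ∈ Set.Icc (0 : ℝ) 1, ∀ d ∈ Set.Ico (0 : ℝ) (1 / 2),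
      (1 - α ≤ CL e d ↔ 0 ≤ α * (1 - 2 * d) - (1 - (2 * e + d)) ^ 2)) ∧
    (∀ α ∈ Set.Icc (0 : ℝ) 1,
      Convex ℝ {ed : ℝ × ℝ | ed.1 ∈ Set.Icc (0 : ℝ) 1 ∧ ed.2 ∈ Set.Ico (0 : ℝ) (1 / 2) ∧
        1 - α ≤ CL ed.1 ed.2}) := by
  have key : ∀ α : ℝ, ∀ e : ℝ, ∀ d ∈ Set.Ico (0 : ℝ) (1 / 2),
      (1 - α ≤ CL e d ↔ 0 ≤ α * (1 - 2 * d) - (1 - (2 * e + d)) ^ 2) := by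
    intro α e d hd
    have hpos : 0 < 1 - 2 * d := by linarith [hd.2]
    unfold CL
    rw [sub_le_sub_iff_left, div_le_iff₀ hpos]
    constructor <;> intro h <;> nlinarith
  constructor
  · intro α _ e _ d hd; exact key α e d hd
  · intro α hα x hx y hy a b ha hb hab
    obtain ⟨hx1, hx2, hx3⟩ := hx
    obtain ⟨hy1, hy2, hy3⟩ := hy
    have he : (a • x + b • y).1 ∈ Set.Icc (0 : ℝ) 1 := by
      simpa using (convex_Icc (0:ℝ) 1) hx1 hy1 ha hb hab
    have hd : (a • x + b • y).2 ∈ Set.Ico (0 : ℝ) (1 / 2) := by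
      simpa using (convex_Ico (0:ℝ) (1/2)) hx2 hy2 ha hb hab
    refine ⟨he, hd, ?_⟩
    rw [key α _ _ hd]
    rw [key α x.1 x.2 hx2] at hx3
    rw [key α y.1 y.2 hy2] at hy3
    simp only [Prod.fst_add, Prod.snd_add, Prod.smul_fst, Prod.smul_snd, smul_eq_mul]
    set u := 1 - (2 * x.1 + x.2) with hu
    set v := 1 - (2 * y.1 + y.2) with hv
    have hid : (1 - (2 * (a * x.1 + b * y.1) + (a * x.2 + b * y.2))) ^ 2
        = a * u ^ 2 + b * v ^ 2 - a * b * (u - v) ^ 2 := by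
      have hb' : b = 1 - a := by linarith
      subst hb'; rw [hu, hv]; ring
    rw [hid]
    have hα1 : a * α + b * α = α := by rw [← add_mul, hab, one_mul]
    nlinarith [mul_nonneg ha hx3, mul_nonneg hb hy3,
      mul_nonneg (mul_nonneg ha hb) (sq_nonneg (u - v))]
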